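/- In the setting H = H₁ ⊕ H₂, Ω = [[Ω₁, Γ],[Γ†, Ω₂]] self-adjoint (finite-dimensional), define H₁c = O_{Ω₁}(range Γ) and H₂c = O_{Ω₂}(range Γ†). Then the smallest subspace of H that is Ω-invariant, invariant under the orthogonal projection P₁ onto H₁, and contains range Γ, is exactly H₁c ⊕ H₂c. -/

import Mathlib

noncomputable section

open LinearMap Module

/-- The smallest `Ω`-invariant subspace containing a subset `S`. -/
def orbit {H : Type*} [NormedAddCommGroup H] [InnerProductSpace ℂ H]
    (Ω : H →ₗ[ℂ] H) (S : Set H) : Submodule ℂ H :=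
  sInf {W : Submodule ℂ H | S ⊆ (W : Set H) ∧ ∀ x ∈ W, Ω x ∈ W}

theorem orbit_invariant {H : Type*} [NormedAddCommGroup H] [InnerProductSpace ℂ H]
    (Ω : H →ₗ[ℂ] H) (S : Set H) : ∀ x ∈ orbit Ω S, Ω x ∈ orbit Ω S := by
  intro x hx
  simp only [orbit, Submodule.mem_sInf] at hx ⊢
  intro W hW
  exact hW.2 x (hx W hW)

variable (H₁ H₂ : Type*)
  [NormedAddCommGroup H₁] [InnerProductSpace ℂ H₁] [FiniteDimensional ℂ H₁]
  [NormedAddCommGroup H₂] [InnerProductSpace ℂ H₂] [FiniteDimensional ℂ H₂]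

/-- The orthogonal direct sum `H = H₁ ⊕ H₂`. -/
abbrev DirSum := WithLp 2 (H₁ × H₂)

/-- Isometric embedding of `H₁` into `H₁ ⊕ H₂`. -/
def emb1 : H₁ →ₗ[ℂ] DirSum H₁ H₂ :=
  (WithLp.linearEquiv 2 ℂ (H₁ × H₂)).symm.toLinearMap ∘ₗ LinearMap.inl ℂ H₁ H₂

/-- Isometric embedding of `H₂` into `H₁ ⊕ H₂`. -/
def emb2 : H₂ →ₗ[ℂ] DirSum H₁ H₂ :=
  (WithLp.linearEquiv 2 ℂ (H₁ × H₂)).symm.toLinearMap ∘ₗ LinearMap.inr ℂ H₁ H₂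

/-- Projection of `H₁ ⊕ H₂` onto the first coordinate. -/
def proj1 : DirSum H₁ H₂ →ₗ[ℂ] H₁ :=
  LinearMap.fst ℂ H₁ H₂ ∘ₗ (WithLp.linearEquiv 2 ℂ (H₁ × H₂)).toLinearMap

/-- Projection of `H₁ ⊕ H₂` onto the second coordinate. -/
def proj2 : DirSum H₁ H₂ →ₗ[ℂ] H₂ :=
  LinearMap.snd ℂ H₁ H₂ ∘ₗ (WithLp.linearEquiv 2 ℂ (H₁ × H₂)).toLinearMap

/-- The copy of `H₁` inside `H₁ ⊕ H₂`. -/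
def sub1 : Submodule ℂ (DirSum H₁ H₂) := LinearMap.range (emb1 H₁ H₂)

/-- The copy of `H₂` inside `H₁ ⊕ H₂`. -/
def sub2 : Submodule ℂ (DirSum H₁ H₂) := LinearMap.range (emb2 H₁ H₂)

variable {H₁ H₂}

/-- The block operator `Ω = [[Ω₁, Γ], [Γ†, Ω₂]]` acting on `H₁ ⊕ H₂` by
`Ω(v₁, v₂) = (Ω₁ v₁ + Γ v₂, Γ† v₁ + Ω₂ v₂)`. -/
def blockOp (Ω₁ : H₁ →ₗ[ℂ] H₁) (Ω₂ : H₂ →ₗ[ℂ] H₂) (Γ : H₂ →ₗ[ℂ] H₁) :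
    DirSum H₁ H₂ →ₗ[ℂ] DirSum H₁ H₂ :=
  emb1 H₁ H₂ ∘ₗ (Ω₁ ∘ₗ proj1 H₁ H₂ + Γ ∘ₗ proj2 H₁ H₂) +
    emb2 H₁ H₂ ∘ₗ (LinearMap.adjoint Γ ∘ₗ proj1 H₁ H₂ + Ω₂ ∘ₗ proj2 H₁ H₂)

section Helpers

open LinearMap Module

variable {H : Type*} [NormedAddCommGroup H] [InnerProductSpace ℂ H]

lemma subset_orbit (Ω : H →ₗ[ℂ] H) (S : Set H) : S ⊆ (orbit Ω S : Set H) :=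
  fun _ hx => Submodule.mem_sInf.2 fun _ hW => hW.1 hx

lemma orbit_le {Ω : H →ₗ[ℂ] H} {S : Set H} {W : Submodule ℂ H}
    (hS : S ⊆ (W : Set H)) (hW : ∀ x ∈ W, Ω x ∈ W) : orbit Ω S ≤ W :=
  sInf_le ⟨hS, hW⟩

variable {H₁ H₂ : Type*}
  [NormedAddCommGroup H₁] [InnerProductSpace ℂ H₁] [FiniteDimensional ℂ H₁]
  [NormedAddCommGroup H₂] [InnerProductSpace ℂ H₂] [FiniteDimensional ℂ H₂]

@[simp] lemma proj1_emb1 (v : H₁) : proj1 H₁ H₂ (emb1 H₁ H₂ v) = v := rfl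
@[simp] lemma proj2_emb1 (v : H₁) : proj2 H₁ H₂ (emb1 H₁ H₂ v) = 0 := rfl
@[simp] lemma proj1_emb2 (v : H₂) : proj1 H₁ H₂ (emb2 H₁ H₂ v) = 0 := rfl
@[simp] lemma proj2_emb2 (v : H₂) : proj2 H₁ H₂ (emb2 H₁ H₂ v) = v := rfl

lemma blockOp_apply (Ω₁ : H₁ →ₗ[ℂ] H₁) (Ω₂ : H₂ →ₗ[ℂ] H₂) (Γ : H₂ →ₗ[ℂ] H₁)
    (x : DirSum H₁ H₂) :
    blockOp Ω₁ Ω₂ Γ x =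
      emb1 H₁ H₂ (Ω₁ (proj1 H₁ H₂ x) + Γ (proj2 H₁ H₂ x)) +
        emb2 H₁ H₂ (LinearMap.adjoint Γ (proj1 H₁ H₂ x) + Ω₂ (proj2 H₁ H₂ x)) := rfl

lemma blockOp_emb1 (Ω₁ : H₁ →ₗ[ℂ] H₁) (Ω₂ : H₂ →ₗ[ℂ] H₂) (Γ : H₂ →ₗ[ℂ] H₁)
    (v : H₁) :
    blockOp Ω₁ Ω₂ Γ (emb1 H₁ H₂ v) =
      emb1 H₁ H₂ (Ω₁ v) + emb2 H₁ H₂ (LinearMap.adjoint Γ v) := by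
  simp [blockOp_apply]

lemma blockOp_emb2 (Ω₁ : H₁ →ₗ[ℂ] H₁) (Ω₂ : H₂ →ₗ[ℂ] H₂) (Γ : H₂ →ₗ[ℂ] H₁)
    (v : H₂) :
    blockOp Ω₁ Ω₂ Γ (emb2 H₁ H₂ v) =
      emb1 H₁ H₂ (Γ v) + emb2 H₁ H₂ (Ω₂ v) := by
  simp [blockOp_apply]

lemma split_mem {W : Submodule ℂ (DirSum H₁ H₂)}
    (hW : W = (W ⊓ sub1 H₁ H₂) ⊔ (W ⊓ sub2 H₁ H₂)) {x : DirSum H₁ H₂} (hx : x ∈ W) :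
    emb1 H₁ H₂ (proj1 H₁ H₂ x) ∈ W ∧ emb2 H₁ H₂ (proj2 H₁ H₂ x) ∈ W := by
  rw [hW] at hx
  obtain ⟨y, hy, z, hz, rfl⟩ := Submodule.mem_sup.1 hx
  obtain ⟨a, rfl⟩ := hy.2
  obtain ⟨b, rfl⟩ := hz.2
  simp only [map_add, proj1_emb1, proj1_emb2, proj2_emb1, proj2_emb2, add_zero, zero_add,
    map_zero]
  exact ⟨hy.1, hz.1⟩

end Helpers

/-- The smallest subspace of `H = H₁ ⊕ H₂` that is `Ω`-invariant, invariant under the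
orthogonal projection onto `H₁` (i.e. splits as `(W ∩ H₁) ⊕ (W ∩ H₂)`), and contains
`range Γ`, is exactly `H₁c ⊕ H₂c` where `H₁c = O_{Ω₁}(range Γ)` and
`H₂c = O_{Ω₂}(range Γ†)`. -/
theorem minimal_reconstructible_subsystem
    (Ω₁ : H₁ →ₗ[ℂ] H₁) (hΩ₁ : Ω₁.IsSymmetric)
    (Ω₂ : H₂ →ₗ[ℂ] H₂) (hΩ₂ : Ω₂.IsSymmetric)
    (Γ : H₂ →ₗ[ℂ] H₁) :
    IsLeast
      {W : Submodule ℂ (DirSum H₁ H₂) |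
        (∀ x ∈ W, blockOp Ω₁ Ω₂ Γ x ∈ W) ∧
        W = (W ⊓ sub1 H₁ H₂) ⊔ (W ⊓ sub2 H₁ H₂) ∧
        Submodule.map (emb1 H₁ H₂) (LinearMap.range Γ) ≤ W}
      (Submodule.map (emb1 H₁ H₂) (orbit Ω₁ (Set.range Γ)) ⊔
        Submodule.map (emb2 H₁ H₂) (orbit Ω₂ (Set.range (LinearMap.adjoint Γ)))) := by
  constructor
  · refine ⟨?_, ?_, ?_⟩
    · intro x hx
      obtain ⟨y, hy, z, hz, rfl⟩ := Submodule.mem_sup.1 hx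
      obtain ⟨a, ha, rfl⟩ := hy
      obtain ⟨b, hb, rfl⟩ := hz
      rw [map_add, blockOp_emb1, blockOp_emb2]
      have h1 : emb1 H₁ H₂ (Ω₁ a) + emb1 H₁ H₂ (Γ b) ∈
          Submodule.map (emb1 H₁ H₂) (orbit Ω₁ (Set.range Γ)) :=
        Submodule.add_mem _ ⟨Ω₁ a, orbit_invariant Ω₁ _ a ha, rfl⟩
          ⟨Γ b, subset_orbit Ω₁ _ ⟨b, rfl⟩, rfl⟩
      have h2 : emb2 H₁ H₂ (LinearMap.adjoint Γ a) + emb2 H₁ H₂ (Ω₂ b) ∈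
          Submodule.map (emb2 H₁ H₂) (orbit Ω₂ (Set.range (LinearMap.adjoint Γ))) :=
        Submodule.add_mem _ ⟨LinearMap.adjoint Γ a, subset_orbit Ω₂ _ ⟨a, rfl⟩, rfl⟩
          ⟨Ω₂ b, orbit_invariant Ω₂ _ b hb, rfl⟩
      have := Submodule.add_mem _ (Submodule.mem_sup_left h1) (Submodule.mem_sup_right h2)
      convert this using 1
      abel
    · refine le_antisymm ?_ (sup_le inf_le_left inf_le_left)
      refine sup_le_sup ?_ ?_
      · exact le_inf le_sup_left (Submodule.map_le_iff_le_comap.2 fun a _ => ⟨a, rfl⟩)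
      · exact le_inf le_sup_right (Submodule.map_le_iff_le_comap.2 fun a _ => ⟨a, rfl⟩)
    · refine le_trans ?_ le_sup_left
      exact Submodule.map_mono fun x hx => subset_orbit Ω₁ _ hx
  · rintro W ⟨hInv, hSplit, hΓ⟩
    -- W₁ and W₂
    set W₁ : Submodule ℂ H₁ := Submodule.comap (emb1 H₁ H₂) W with hW₁def
    set W₂ : Submodule ℂ H₂ := Submodule.comap (emb2 H₁ H₂) W with hW₂def
    have hW₁inv : ∀ v ∈ W₁, Ω₁ v ∈ W₁ := by
      intro v hv
      have h := hInv _ hv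
      rw [blockOp_emb1] at h
      have := (split_mem hSplit h).1
      simpa [hW₁def] using this
    have hW₂inv : ∀ v ∈ W₂, Ω₂ v ∈ W₂ := by
      intro v hv
      have h := hInv _ hv
      rw [blockOp_emb2] at h
      have := (split_mem hSplit h).2
      simpa [hW₂def] using this
    have hΓW₁ : Set.range Γ ⊆ (W₁ : Set H₁) := by
      rintro _ ⟨u, rfl⟩
      exact hΓ ⟨Γ u, ⟨u, rfl⟩, rfl⟩
    have hO₁ : orbit Ω₁ (Set.range Γ) ≤ W₁ := orbit_le hΓW₁ hW₁inv
    -- Γ† of W₁ lands in W₂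
    have hAdjW₂ : ∀ v ∈ W₁, LinearMap.adjoint Γ v ∈ W₂ := by
      intro v hv
      have h := hInv _ hv
      rw [blockOp_emb1] at h
      have := (split_mem hSplit h).2
      simpa [hW₂def] using this
    have hAdjO : Set.range (LinearMap.adjoint Γ) ⊆ (W₂ : Set H₂) := by
      rintro _ ⟨x, rfl⟩
      obtain ⟨a, ha, b, hb, rfl⟩ :=
        Submodule.exists_add_mem_mem_orthogonal (K := orbit Ω₁ (Set.range Γ)) x
      have hb0 : LinearMap.adjoint Γ b = 0 := by
        rw [← inner_self_eq_zero (𝕜 := ℂ)]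
        rw [LinearMap.adjoint_inner_left]
        exact inner_eq_zero_symm.mp (hb _ (subset_orbit Ω₁ _ ⟨LinearMap.adjoint Γ b, rfl⟩))
      rw [map_add, hb0, add_zero]
      exact hAdjW₂ a (hO₁ ha)
    have hO₂ : orbit Ω₂ (Set.range (LinearMap.adjoint Γ)) ≤ W₂ := orbit_le hAdjO hW₂inv
    refine sup_le ?_ ?_
    · exact Submodule.map_le_iff_le_comap.2 hO₁
    · exact Submodule.map_le_iff_le_comap.2 hO₂
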